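/- Let M^(k)_{ℓ..r} be defined for all integer 0 ≤ ℓ ≤ r ≤ n by: M^(k)_{ℓ..ℓ} = I; M^(k)_{ℓ..r} = M_r if r−ℓ=1; and for r−ℓ>1, M^(k)_{ℓ..r} = ∑_{i+j=k} M^(i)_{ℓ..m}M^(j)_{m..r} − ∑_{i+j=k-1} M^(i)_{ℓ..m}M^(j)_{m..r} where m = LCA(ℓ,r). Then for every ℓ < r and every 1 ≤ h ≤ k: M^(k)_{ℓ..r} = ∑_{s=ℓ+1}^{r} M^(h-1)_{ℓ..s-1}·M_s·M^(k-h)_{s..r} − ∑_{s=ℓ+1}^{r-1} M^(h-1)_{ℓ..s}·M^(k-h)_{s..r}. -/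

import Mathlib

open Finset Matrix

/-- `(ℓ, r)` is a dyadic interval: `ℓ = i·2^t`, `r = ℓ + 2^t`. -/
def IsDyadicPair (ℓ r : ℕ) : Prop :=
  ∃ i t : ℕ, ℓ = i * 2 ^ t ∧ r = ℓ + 2 ^ t

/-- `m` is `LCA(ℓ, r)`: `m` is a multiple of `2^t` lying strictly in `(ℓ,r)`, where `t`
is the largest integer such that `(ℓ,r)` contains a multiple of `2^t`. -/
def IsLCA (ℓ r m : ℕ) : Prop :=
  ∃ t : ℕ, (ℓ < m ∧ m < r ∧ 2 ^ t ∣ m) ∧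
    ∀ t' m' : ℕ, ℓ < m' → m' < r → 2 ^ t' ∣ m' → t' ≤ t

/-! Induction on `r - ℓ`, splitting at `m = LCA(ℓ, r)`. For `s ∈ (ℓ, m)` the interval `(s, r)`
still has LCA `m` and is not dyadic, and likewise `(ℓ, u)` for `u ∈ (m, r)`; so the recursion, even
in order `0`, expands every factor `M^(k-h)_{s..r}` with `s ≤ m` and `M^(h-1)_{ℓ..u}` with `u ≥ m`
through `m`. After this substitution the induction hypothesis on `(ℓ, m)` and `(m, r)` turns the
pivots `s ≤ m` and `s > m` into two complementary pieces of the coefficient of `X^k` in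
`A(X) (1 - X) B(X)`, where `A`, `B` are the generating functions of `M^(·)_{ℓ..m}` and
`M^(·)_{m..r}`; by the recursion in order `k ≥ 1` that coefficient is `M^(k)_{ℓ..r}`. -/

theorem exists_isLCA {ℓ r : ℕ} (h : ℓ + 1 < r) : ∃ m, IsLCA ℓ r m := by
  classical
  let P t := ∃ m, ℓ < m ∧ m < r ∧ 2 ^ t ∣ m
  have hP : ∀ t, P t → t ≤ r := fun t ⟨m, _, hmr, hdvd⟩ =>
    Nat.lt_two_pow_self.le.trans ((Nat.le_of_dvd (by omega) hdvd).trans hmr.le)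
  obtain ⟨m, hm⟩ := Nat.findGreatest_spec (P := P) (Nat.zero_le r) ⟨ℓ + 1, by omega, h, by simp⟩
  exact ⟨m, _, hm, fun t m' h₁ h₂ h₃ =>
    Nat.le_findGreatest (hP t ⟨m', h₁, h₂, h₃⟩) ⟨m', h₁, h₂, h₃⟩⟩

namespace IsLCA

variable {ℓ r m s u : ℕ}

theorem lt (h : IsLCA ℓ r m) : ℓ < m ∧ m < r :=
  let ⟨_, ⟨hlm, hmr, _⟩, _⟩ := h; ⟨hlm, hmr⟩

theorem mono (h : IsLCA ℓ r m) (hs : ℓ ≤ s) (hsm : s < m) (hmu : m < u) (hu : u ≤ r) :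
    IsLCA s u m :=
  let ⟨t, ⟨_, _, hdvd⟩, hmax⟩ := h
  ⟨t, ⟨hsm, hmu, hdvd⟩, fun t' m' h₁ h₂ => hmax t' m' (by omega) (by omega)⟩

theorem not_isDyadicPair (h : IsLCA ℓ r m) (hs : ℓ ≤ s) (hsm : s < m) (hmu : m < u)
    (hu : u ≤ r) (hne : ℓ < s ∨ u < r) : ¬IsDyadicPair s u := by
  -- The endpoint of `(s, u)` inside `(ℓ, r)` forces `2 ^ v ∣ m`, yet `m` lies strictly between
  -- the consecutive multiples `s = i * 2 ^ v` and `u = (i + 1) * 2 ^ v`.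
  rintro ⟨i, v, rfl, rfl⟩
  obtain ⟨t, ⟨-, -, hdvd⟩, hmax⟩ := h
  have hvt : v ≤ t := by
    rcases hne with hne | hne
    · exact hmax v _ hne (by omega) (dvd_mul_left _ _)
    · exact hmax v (i * 2 ^ v + 2 ^ v) (by omega) hne ⟨i + 1, by ring⟩
  obtain ⟨q, rfl⟩ := (pow_dvd_pow 2 hvt).trans hdvd
  have h₁ : i < q := Nat.lt_of_mul_lt_mul_left (a := 2 ^ v) (by linarith)
  have h₂ : q < i + 1 := Nat.lt_of_mul_lt_mul_left (a := 2 ^ v) (by linarith)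
  omega

end IsLCA

section ConvOneSub

variable {R : Type*} [Ring R]

/-- The coefficient of `X ^ k` in `A(X) * (1 - X) * B(X)`, for generating functions `A`, `B`. -/
def convOneSub (A B : ℕ → R) (k : ℕ) : R :=
  (∑ p ∈ antidiagonal k, A p.1 * B p.2) -
    if k = 0 then 0 else ∑ p ∈ antidiagonal (k - 1), A p.1 * B p.2

theorem convOneSub_eq_sum_range (A B : ℕ → R) (k : ℕ) :
    convOneSub A B k =
      (∑ i ∈ range (k + 1), A i * B (k - i)) - ∑ i ∈ range k, A i * B (k - 1 - i) := by
  cases k <;> simp [convOneSub, Nat.sum_antidiagonal_eq_sum_range_succ (fun i j => A i * B j)]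

theorem sum_mul_convOneSub {ι : Type*} (s : Finset ι) (x : ι → R) (A : ι → ℕ → R)
    (B : ℕ → R) (k : ℕ) :
    ∑ t ∈ s, x t * convOneSub (A t) B k = convOneSub (fun i => ∑ t ∈ s, x t * A t i) B k := by
  simp only [convOneSub_eq_sum_range, mul_sub, mul_sum, sum_mul,
    sum_sub_distrib, mul_assoc]
  rw [sum_comm, sum_comm (s := s) (t := range k)]

theorem sum_convOneSub_mul {ι : Type*} (s : Finset ι) (A : ℕ → R) (B : ι → ℕ → R)
    (y : ι → R) (k : ℕ) :
    ∑ t ∈ s, convOneSub A (B t) k * y t = convOneSub A (fun j => ∑ t ∈ s, B t j * y t) k := by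
  simp only [convOneSub_eq_sum_range, sub_mul, mul_sum, sum_mul,
    sum_sub_distrib, mul_assoc]
  rw [sum_comm, sum_comm (s := s) (t := range k)]

theorem convOneSub_sub_right (A B B' : ℕ → R) (k : ℕ) :
    convOneSub A B k - convOneSub A B' k = convOneSub A (fun j => B j - B' j) k := by
  simp only [convOneSub_eq_sum_range, mul_sub, sum_sub_distrib]
  abel

theorem convOneSub_const_left (x : R) (B : ℕ → R) (k : ℕ) :
    convOneSub (fun _ => x) B k = x * B k := by
  rw [convOneSub_eq_sum_range, sum_range_succ',
    sum_congr rfl fun i _ => by rw [show k - (i + 1) = k - 1 - i by omega], Nat.sub_zero,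
    add_sub_cancel_left]

theorem convOneSub_const_right (A : ℕ → R) (y : R) (k : ℕ) :
    convOneSub A (fun _ => y) k = A k * y := by
  rw [convOneSub_eq_sum_range, sum_range_succ, add_sub_cancel_left]

theorem convOneSub_add_one_add (B C : ℕ → R) (a c : ℕ) :
    convOneSub B C (a + 1 + c) =
      convOneSub (fun i => B (a + 1 + i) - B a) C c + convOneSub B (fun j => C (j + 1 + c)) a := by
  have hsplit : ∑ i ∈ range (a + 1 + c + 1), B i * C (a + 1 + c - i) =
      (∑ i ∈ range (a + 1), B i * C (a - i + 1 + c)) +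
        ∑ i ∈ range (c + 1), B (a + 1 + i) * C (c - i) := by
    rw [show a + 1 + c + 1 = (a + 1) + (c + 1) by ring, sum_range_add]
    congr 1 <;> refine sum_congr rfl fun i hi => ?_ <;> rw [mem_range] at hi <;> congr 2 <;> omega
  have hsplit' : ∑ i ∈ range (a + 1 + c), B i * C (a + 1 + c - 1 - i) =
      (∑ i ∈ range a, B i * C (a - 1 - i + 1 + c)) + B a * C c +
        ∑ i ∈ range c, B (a + 1 + i) * C (c - 1 - i) := by
    rw [sum_range_add, sum_range_succ, show a + 1 + c - 1 - a = c by omega]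
    refine congr_arg₂ _ (congr_arg₂ _ ?_ rfl) ?_ <;> refine sum_congr rfl fun i hi => ?_ <;>
      rw [mem_range] at hi <;> congr 2 <;> omega
  have hconst := convOneSub_const_left (B a) C c
  simp only [convOneSub_eq_sum_range, sub_mul, sum_sub_distrib] at hconst ⊢
  rw [hsplit, hsplit', ← hconst]
  abel

end ConvOneSub

theorem sum_Ioc_eq_sum_Ioo_add {A : Type*} [AddCommMonoid A] (f : ℕ → A) {ℓ r : ℕ} (h : ℓ < r) :
    ∑ s ∈ Ioc ℓ r, f s = ∑ s ∈ Ioo ℓ r, f s + f r := by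
  rw [← Ioo_insert_right h, sum_insert (by simp), add_comm]

theorem sum_Ioc_add_sum_Ioo {A : Type*} [AddCommMonoid A] (f : ℕ → A) {ℓ m r : ℕ} (hlm : ℓ ≤ m)
    (hmr : m < r) : ∑ s ∈ Ioc ℓ m, f s + ∑ s ∈ Ioo m r, f s = ∑ s ∈ Ioo ℓ r, f s := by
  rw [← sum_union <| disjoint_left.2 fun s hs hs' => by
    simp only [mem_Ioc, mem_Ioo] at hs hs'; omega]
  congr 1
  ext s
  simp only [mem_union, mem_Ioc, mem_Ioo]
  omega

section LCARecursion

variable {R : Type*} [Ring R]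

def SatisfiesLCARecursion (Mk : ℕ → ℕ → ℕ → R) : Prop :=
  ∀ k ℓ r m : ℕ, 1 < r - ℓ → IsLCA ℓ r m → (1 ≤ k ∨ ¬IsDyadicPair ℓ r) →
    Mk k ℓ r = convOneSub (Mk · ℓ m) (Mk · m r) k

def pivotSum (M : ℕ → R) (Mk : ℕ → ℕ → ℕ → R) (a c ℓ r : ℕ) : R :=
  (∑ s ∈ Ioc ℓ r, Mk a ℓ (s - 1) * M s * Mk c s r) - ∑ s ∈ Ioo ℓ r, Mk a ℓ s * Mk c s r

variable {M : ℕ → R} {Mk : ℕ → ℕ → ℕ → R}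

theorem eq_convOneSub_of_isLCA (hid : ∀ k ℓ, Mk k ℓ ℓ = 1) (hrec : SatisfiesLCARecursion Mk)
    {ℓ r m s u : ℕ} (hm : IsLCA ℓ r m) (hs : ℓ ≤ s) (hsm : s ≤ m) (hmu : m ≤ u) (hu : u ≤ r)
    (hne : ℓ < s ∨ u < r) (k : ℕ) :
    Mk k s u = convOneSub (Mk · s m) (Mk · m u) k := by
  obtain rfl | hsm := hsm.eq_or_lt
  · simp only [hid, convOneSub_const_left, one_mul]
  obtain rfl | hmu := hmu.eq_or_lt
  · simp only [hid, convOneSub_const_right, mul_one]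
  exact hrec k s u m (by omega) (hm.mono hs hsm hmu hu)
    (Or.inr (hm.not_isDyadicPair hs hsm hmu hu hne))

theorem eq_pivotSum_of_isLCA (hid : ∀ k ℓ, Mk k ℓ ℓ = 1) (hrec : SatisfiesLCARecursion Mk)
    {ℓ r m : ℕ} (hm : IsLCA ℓ r m) (a c : ℕ)
    (ihl : ∀ i, Mk (a + 1 + i) ℓ m = pivotSum M Mk a i ℓ m)
    (ihr : ∀ j, Mk (j + 1 + c) m r = pivotSum M Mk j c m r) :
    Mk (a + 1 + c) ℓ r = pivotSum M Mk a c ℓ r := by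
  obtain ⟨hlm, hmr⟩ := hm.lt
  have hleft : ∑ s ∈ Ioc ℓ m, (Mk a ℓ (s - 1) * M s - Mk a ℓ s) * Mk c s r =
      convOneSub (fun i => Mk (a + 1 + i) ℓ m - Mk a ℓ m) (Mk · m r) c := by
    calc _ = ∑ s ∈ Ioc ℓ m, (Mk a ℓ (s - 1) * M s - Mk a ℓ s) *
          convOneSub (Mk · s m) (Mk · m r) c := by
          refine sum_congr rfl fun s hs => ?_
          rw [mem_Ioc] at hs
          rw [eq_convOneSub_of_isLCA hid hrec hm hs.1.le hs.2 hmr.le le_rfl (Or.inl hs.1)]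
      _ = _ := by
          rw [sum_mul_convOneSub]
          congr 1
          funext i
          simp only [ihl i, pivotSum, sub_mul, sum_sub_distrib]
          rw [sum_Ioc_eq_sum_Ioo_add (fun s => Mk a ℓ s * Mk i s m) hlm, hid, mul_one,
            sub_add_eq_sub_sub]
  have hright : (∑ s ∈ Ioc m r, Mk a ℓ (s - 1) * M s * Mk c s r) -
      ∑ s ∈ Ioo m r, Mk a ℓ s * Mk c s r =
      convOneSub (Mk · ℓ m) (fun j => Mk (j + 1 + c) m r) a := by
    calc _ = (∑ s ∈ Ioc m r, convOneSub (Mk · ℓ m) (Mk · m (s - 1)) a * (M s * Mk c s r)) -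
          ∑ s ∈ Ioo m r, convOneSub (Mk · ℓ m) (Mk · m s) a * Mk c s r := by
          congr 1 <;> refine sum_congr rfl fun s hs => ?_
          · rw [mem_Ioc] at hs
            rw [← mul_assoc, eq_convOneSub_of_isLCA hid hrec hm le_rfl hlm.le (by omega) (by omega)
              (Or.inr (by omega))]
          · rw [mem_Ioo] at hs
            rw [eq_convOneSub_of_isLCA hid hrec hm le_rfl hlm.le hs.1.le hs.2.le (Or.inr hs.2)]
      _ = _ := by
          rw [sum_convOneSub_mul, sum_convOneSub_mul, convOneSub_sub_right]
          congr 1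
          funext j
          simp only [ihr j, pivotSum, mul_assoc]
  rw [hrec _ ℓ r m (by omega) hm (Or.inl (by omega)), convOneSub_add_one_add, ← hleft, ← hright,
    pivotSum, ← sum_Ioc_consecutive _ hlm.le hmr.le, ← sum_Ioc_add_sum_Ioo _ hlm.le hmr]
  simp only [sub_mul, sum_sub_distrib]
  abel

theorem eq_pivotSum (hid : ∀ k ℓ, Mk k ℓ ℓ = 1) (hbase : ∀ k ℓ, Mk k ℓ (ℓ + 1) = M (ℓ + 1))
    (hrec : SatisfiesLCARecursion Mk) (a c : ℕ) {ℓ r : ℕ} (hlr : ℓ < r) :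
    Mk (a + 1 + c) ℓ r = pivotSum M Mk a c ℓ r := by
  induction hd : r - ℓ using Nat.strong_induction_on generalizing ℓ r a c with
  | _ d ih =>
  obtain rfl | hlr := (Nat.succ_le_of_lt hlr).eq_or_lt
  · have hempty : Ioo ℓ (ℓ + 1) = ∅ := by
      ext x; simp only [mem_Ioo, notMem_empty, iff_false]; omega
    simp [pivotSum, hid, hbase, hempty]
  obtain ⟨m, hm⟩ := exists_isLCA hlr
  obtain ⟨hlm, hmr⟩ := hm.lt
  exact eq_pivotSum_of_isLCA hid hrec hm a c (fun i => ih _ (by omega) a i hlm rfl)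
    (fun j => ih _ (by omega) j c hmr rfl)

end LCARecursion

theorem stmt_13_general (w : ℕ) (M : ℕ → Matrix (Fin w) (Fin w) ℝ)
    (Mk : ℕ → ℕ → ℕ → Matrix (Fin w) (Fin w) ℝ)
    (hid : ∀ k ℓ : ℕ, Mk k ℓ ℓ = 1)
    (hbase : ∀ k ℓ : ℕ, Mk k ℓ (ℓ + 1) = M (ℓ + 1))
    (hrec : ∀ k ℓ r m : ℕ, 1 < r - ℓ → IsLCA ℓ r m → (1 ≤ k ∨ ¬IsDyadicPair ℓ r) →
      Mk k ℓ r =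
        (∑ p ∈ Finset.HasAntidiagonal.antidiagonal k, Mk p.1 ℓ m * Mk p.2 m r) -
          (if k = 0 then 0 else
            ∑ p ∈ Finset.HasAntidiagonal.antidiagonal (k - 1), Mk p.1 ℓ m * Mk p.2 m r))
    (ℓ r h k : ℕ) (hlr : ℓ < r) (hh1 : 1 ≤ h) (hhk : h ≤ k) :
    Mk k ℓ r =
      (∑ s ∈ Finset.Ioc ℓ r, Mk (h - 1) ℓ (s - 1) * M s * Mk (k - h) s r) -
        ∑ s ∈ Finset.Ioo ℓ r, Mk (h - 1) ℓ s * Mk (k - h) s r := by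
  obtain ⟨a, rfl⟩ := Nat.exists_eq_add_of_le' hh1
  obtain ⟨c, rfl⟩ := Nat.exists_eq_add_of_le hhk
  rw [Nat.add_sub_cancel, Nat.add_sub_cancel_left]
  exact eq_pivotSum hid hbase hrec a c hlr

/-- Lemma 4.7 (the new recursion): if the matrices `M^(k)_{ℓ..r}` satisfy
`M^(k)_{ℓ..ℓ} = I`, `M^(k)_{ℓ..ℓ+1} = M_{ℓ+1}`, and the LCA-based binary recursion
(for all `k ≥ 1`, and also for `k = 0` on non-dyadic intervals), then for every
`ℓ < r ≤ n` and every `1 ≤ h ≤ k`,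
`M^(k)_{ℓ..r} = ∑_{s=ℓ+1}^{r} M^(h-1)_{ℓ..s-1} M_s M^(k-h)_{s..r}
  − ∑_{s=ℓ+1}^{r-1} M^(h-1)_{ℓ..s} M^(k-h)_{s..r}`. -/
theorem stmt_13 (w n : ℕ) (M : ℕ → Matrix (Fin w) (Fin w) ℝ)
    (Mk : ℕ → ℕ → ℕ → Matrix (Fin w) (Fin w) ℝ)
    (hid : ∀ k ℓ : ℕ, Mk k ℓ ℓ = 1)
    (hbase : ∀ k ℓ : ℕ, Mk k ℓ (ℓ + 1) = M (ℓ + 1))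
    (hrec : ∀ k ℓ r m : ℕ, 1 < r - ℓ → IsLCA ℓ r m → (1 ≤ k ∨ ¬IsDyadicPair ℓ r) →
      Mk k ℓ r =
        (∑ p ∈ Finset.HasAntidiagonal.antidiagonal k, Mk p.1 ℓ m * Mk p.2 m r) -
          (if k = 0 then 0 else
            ∑ p ∈ Finset.HasAntidiagonal.antidiagonal (k - 1), Mk p.1 ℓ m * Mk p.2 m r))
    (ℓ r h k : ℕ) (hlr : ℓ < r) (hrn : r ≤ n) (hh1 : 1 ≤ h) (hhk : h ≤ k) :
    Mk k ℓ r =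
      (∑ s ∈ Finset.Ioc ℓ r, Mk (h - 1) ℓ (s - 1) * M s * Mk (k - h) s r) -
        ∑ s ∈ Finset.Ioo ℓ r, Mk (h - 1) ℓ s * Mk (k - h) s r :=
  stmt_13_general w M Mk hid hbase hrec ℓ r h k hlr hh1 hhk
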